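/- arXiv:1602.08894 — 2 statements merged into one kernel-verified Lean document; each statement's English description precedes it below -/
import Mathlib

section
/- Let d ≥ 2 and let I_1, …, I_k be subsets of {1, …, d} with |I_j| ≥ 2 for all j and |I_i ∩ I_j| ≤ 1 for i ≠ j. For each j let Q_j^low and Q_j^up be |I_j|-quasi-copulas whose survival functions satisfy Qhat_j^low(v) ≤ Qhat_j^up(v) for all v. Then every d-copula C whose I_j-margins C_{I_j} satisfy Qhat_j^low(v) ≤ Chat_{I_j}(v) ≤ Qhat_j^up(v) for all v ∈ [0,1]^{|I_j|} and all j fulfills, for all u ∈ [0,1]^d: max( max_{1 ≤ j ≤ k} ( Qhat_j^low(u_{I_j}) − Σ_{l ∉ I_j} u_l ), W_d(1 − u) ) ≤ Chat(u) ≤ min( min_{1 ≤ j ≤ k} Qhat_j^up(u_{I_j}), M_d(1 − u) ), where 1 − u = (1 − u_1, …, 1 − u_d) and Chat_{I_j} denotes the survival function of the margin C_{I_j}. -/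
open scoped BigOperators NNReal ENNReal

noncomputable section

/-- Membership in the unit cube `[0,1]^ι`. -/
def InCube {ι : Type*} (u : ι → ℝ) : Prop := ∀ i, 0 ≤ u i ∧ u i ≤ 1

/-- A (quasi-)copula on the index set `ι`: it maps the unit cube to `[0,1]`,
satisfies the boundary conditions (QC1), is increasing in each argument (QC2)
and is `1`-Lipschitz for the `l¹`-norm (QC3). -/
structure IsQuasiCopula (ι : Type*) [Fintype ι] (Q : (ι → ℝ) → ℝ) : Prop where
  nonneg : ∀ u : ι → ℝ, InCube u → 0 ≤ Q u
  le_one : ∀ u : ι → ℝ, InCube u → Q u ≤ 1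
  zero_boundary : ∀ u : ι → ℝ, InCube u → (∃ i, u i = 0) → Q u = 0
  one_boundary : ∀ u : ι → ℝ, InCube u → ∀ i : ι, (∀ j, j ≠ i → u j = 1) → Q u = u i
  mono : ∀ u v : ι → ℝ, InCube u → InCube v → (∀ i, u i ≤ v i) → Q u ≤ Q v
  lipschitz : ∀ u v : ι → ℝ, InCube u → InCube v → |Q u - Q v| ≤ ∑ i, |u i - v i|

/-- The `Q`-volume of the box `(a, b]`: the signed sum over the vertices of the box,
a vertex getting the sign `(-1)^{#{i : c i = a i}}`. -/
def boxVolume {ι : Type*} [Fintype ι] [DecidableEq ι] (Q : (ι → ℝ) → ℝ)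
    (a b : ι → ℝ) : ℝ :=
  ∑ J : Finset ι, (-1 : ℝ) ^ J.card * Q (fun i => if i ∈ J then a i else b i)

/-- `d`-increasingness: every box contained in the unit cube has nonnegative volume. -/
def DIncreasing {ι : Type*} [Fintype ι] [DecidableEq ι] (Q : (ι → ℝ) → ℝ) : Prop :=
  ∀ a b : ι → ℝ, InCube a → InCube b → (∀ i, a i ≤ b i) → 0 ≤ boxVolume Q a b

/-- A copula is a quasi-copula which is `d`-increasing. -/
def IsCopula (ι : Type*) [Fintype ι] [DecidableEq ι] (Q : (ι → ℝ) → ℝ) : Prop :=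
  IsQuasiCopula ι Q ∧ DIncreasing Q

/-- The lower Fréchet–Hoeffding bound `W_d(u) = max(0, Σ u_i - d + 1)`. -/
def Wd {ι : Type*} [Fintype ι] (u : ι → ℝ) : ℝ :=
  max 0 ((∑ i, u i) - (Fintype.card ι : ℝ) + 1)

/-- The upper Fréchet–Hoeffding bound `M_d(u) = min(u_1, …, u_d)`. -/
def Md {ι : Type*} (u : ι → ℝ) : ℝ := sInf (Set.range u)

/-- The improved lower Fréchet–Hoeffding bound for the prescription `Q = Q*` on `S`:
`max(0, Σ u_i - d + 1, max_{x ∈ S} (Q*(x) - Σ (x_i - u_i)^+))`. -/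
def QLowS {ι : Type*} [Fintype ι] (S : Set (ι → ℝ)) (Q : (ι → ℝ) → ℝ)
    (u : ι → ℝ) : ℝ :=
  max (Wd u) (sSup ((fun x => Q x - ∑ i, max (x i - u i) 0) '' S))

/-- The improved upper Fréchet–Hoeffding bound for the prescription `Q = Q*` on `S`:
`min(u_1, …, u_d, min_{x ∈ S} (Q*(x) + Σ (u_i - x_i)^+))`. -/
def QUpS {ι : Type*} [Fintype ι] (S : Set (ι → ℝ)) (Q : (ι → ℝ) → ℝ)
    (u : ι → ℝ) : ℝ :=
  min (Md u) (sInf ((fun x => Q x + ∑ i, max (u i - x i) 0) '' S))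

/-- The single-point improved lower bound `Q_low^{x,r}`. -/
def QLowPt {ι : Type*} [Fintype ι] (x : ι → ℝ) (r : ℝ) (v : ι → ℝ) : ℝ :=
  max (Wd v) (r - ∑ i, max (x i - v i) 0)

/-- The single-point improved upper bound `Q_up^{x,r}`. -/
def QUpPt {ι : Type*} [Fintype ι] (x : ι → ℝ) (r : ℝ) (v : ι → ℝ) : ℝ :=
  min (Md v) (r + ∑ i, max (v i - x i) 0)

/-- The `J`-margin of `Q`: evaluate `Q` at the lift of `v`, i.e. the vector which
carries the coordinates of `v` on `J` and equals `1` elsewhere. -/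
def marginQ {ι : Type*} [Fintype ι] [DecidableEq ι] (Q : (ι → ℝ) → ℝ)
    (J : Finset ι) (v : ↥J → ℝ) : ℝ :=
  Q fun i => if h : i ∈ J then v ⟨i, h⟩ else 1

/-- The survival function of `Q`:
`Q̂(u) = V_Q((u,1]) = Σ_{J ⊆ ι} (-1)^{|J|} Q(u^J)` where `u^J` agrees with `u` on `J`
and equals `1` elsewhere. -/
def survivalF {ι : Type*} [Fintype ι] [DecidableEq ι] (Q : (ι → ℝ) → ℝ)
    (u : ι → ℝ) : ℝ :=
  ∑ J : Finset ι, (-1 : ℝ) ^ J.card * Q (fun i => if i ∈ J then u i else 1)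

/-- The improved lower Fréchet–Hoeffding bound from information on the
lower-dimensional margins `I_1, …, I_k`:
`max( max_j ( Q_j^low(u_{I_j}) + Σ_{l ∉ I_j} (u_l − 1) ), W_d(u) )`. -/
def QLowI {d k : ℕ} (J : Fin k → Finset (Fin d))
    (Ql : (j : Fin k) → ((↥(J j) → ℝ) → ℝ)) (u : Fin d → ℝ) : ℝ :=
  max (⨆ j, (Ql j (fun i => u i.val) + ∑ l ∈ (J j)ᶜ, (u l - 1))) (Wd u)

/-- The improved upper Fréchet–Hoeffding bound from information on the
lower-dimensional margins `I_1, …, I_k`: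
`min( min_j Q_j^up(u_{I_j}), M_d(u) )`. -/
def QUpI {d k : ℕ} (J : Fin k → Finset (Fin d))
    (Qu : (j : Fin k) → ((↥(J j) → ℝ) → ℝ)) (u : Fin d → ℝ) : ℝ :=
  min (⨅ j, Qu j (fun i => u i.val)) (Md u)

section Helpers

variable {ι : Type*} [Fintype ι] [DecidableEq ι]

lemma pair_sum (Q : (ι → ℝ) → ℝ) (a b : ι → ℝ) (i : ι) :
    boxVolume Q a b =
      ∑ K ∈ Finset.univ.filter (fun K : Finset ι => i ∉ K),
        (-1:ℝ)^K.card *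
          (Q (fun j => if j = i then b i else if j ∈ K then a j else b j)
           - Q (fun j => if j = i then a i else if j ∈ K then a j else b j)) := by
  classical
  unfold boxVolume
  rw [← Finset.sum_filter_add_sum_filter_not Finset.univ (fun K : Finset ι => i ∈ K)]
  have h1 : ∑ J ∈ Finset.univ.filter (fun K : Finset ι => i ∈ K),
      (-1:ℝ)^J.card * Q (fun j => if j ∈ J then a j else b j)
      = ∑ K ∈ Finset.univ.filter (fun K : Finset ι => i ∉ K),
        (-(-1:ℝ)^K.card) * Q (fun j => if j = i then a i else if j ∈ K then a j else b j) := by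
    refine Finset.sum_nbij' (fun J => J.erase i) (fun K => insert i K) ?_ ?_ ?_ ?_ ?_
    · intro J hJ; simp
    · intro K hK
      simp only [Finset.mem_filter, Finset.mem_univ, true_and] at hK ⊢
      simp [hK]
    · intro J hJ
      simp only [Finset.mem_filter, Finset.mem_univ, true_and] at hJ
      exact Finset.insert_erase hJ
    · intro K hK
      simp only [Finset.mem_filter, Finset.mem_univ, true_and] at hK
      exact Finset.erase_insert hK
    · intro J hJ
      simp only [Finset.mem_filter, Finset.mem_univ, true_and] at hJ
      have hcard : (J.erase i).card + 1 = J.card := Finset.card_erase_add_one hJ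
      have harg : (fun j => if j ∈ J then a j else b j)
          = fun j => if j = i then a i else if j ∈ J.erase i then a j else b j := by
        funext j
        by_cases h : j = i
        · subst h; simp [hJ]
        · simp [Finset.mem_erase, h]
      rw [harg, ← hcard, pow_succ]
      ring
  have h2 : ∑ J ∈ Finset.univ.filter (fun K : Finset ι => i ∉ K),
      (-1:ℝ)^J.card * Q (fun j => if j ∈ J then a j else b j)
      = ∑ K ∈ Finset.univ.filter (fun K : Finset ι => i ∉ K),
        (-1:ℝ)^K.card * Q (fun j => if j = i then b i else if j ∈ K then a j else b j) := by
    refine Finset.sum_congr rfl fun K hK => ?_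
    simp only [Finset.mem_filter, Finset.mem_univ, true_and] at hK
    congr 1
    congr 1
    funext j
    by_cases h : j = i
    · subst h; simp [hK]
    · simp [h]
  rw [h1, h2, ← Finset.sum_add_distrib]
  refine Finset.sum_congr rfl fun K _ => ?_
  ring

lemma boxVolume_split (Q : (ι → ℝ) → ℝ) (a b : ι → ℝ) (i : ι) (m : ℝ) :
    boxVolume Q a b =
      boxVolume Q a (fun j => if j = i then m else b j)
      + boxVolume Q (fun j => if j = i then m else a j) b := by
  classical
  rw [pair_sum Q a b i, pair_sum Q a (fun j => if j = i then m else b j) i,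
    pair_sum Q (fun j => if j = i then m else a j) b i, ← Finset.sum_add_distrib]
  refine Finset.sum_congr rfl fun K hK => ?_
  simp only [Finset.mem_filter, Finset.mem_univ, true_and] at hK
  have e1 : ∀ t : ℝ, (fun j => if j = i then t else if j ∈ K then a j else
      (if j = i then m else b j)) = fun j => if j = i then t else if j ∈ K then a j else b j := by
    intro t; funext j; by_cases h : j = i <;> simp [h]
  have e2 : ∀ t : ℝ, (fun j => if j = i then t else if j ∈ K then
      (if j = i then m else a j) else b j) = fun j => if j = i then t else if j ∈ K then a j else b j := by
    intro t; funext j; by_cases h : j = i <;> simp [h]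
  simp only [eq_self_iff_true, if_true, e1, e2]
  ring

end Helpers

section Mono

variable {ι : Type*} [Fintype ι] [DecidableEq ι]
variable {C : (ι → ℝ) → ℝ}

lemma incube_ite {a : ι → ℝ} (ha : InCube a) {m : ℝ} (h0 : 0 ≤ m) (h1 : m ≤ 1) (i : ι) :
    InCube (fun j => if j = i then m else a j) := by
  intro j
  by_cases h : j = i
  · simpa [h] using ⟨h0, h1⟩
  · simpa [h] using ha j

lemma ite_self_eq {a : ι → ℝ} (i : ι) :
    (fun j => if j = i then a i else a j) = a := by
  funext j; by_cases h : j = i <;> simp [h]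

lemma step_mono (hd : DIncreasing C) {a b : ι → ℝ} (ha : InCube a) (hb : InCube b)
    (hab : ∀ j, a j ≤ b j) (i : ι) {m : ℝ} (h0 : 0 ≤ m) (hm : m ≤ a i) :
    boxVolume C a b ≤ boxVolume C (fun j => if j = i then m else a j) b := by
  have hsplit := boxVolume_split C (fun j => if j = i then m else a j) b i (a i)
  have hre : (fun j => if j = i then a i else (fun j' => if j' = i then m else a j') j)
      = a := by
    funext j; by_cases h : j = i <;> simp [h]
  rw [hre] at hsplit
  have hnn : 0 ≤ boxVolume C (fun j => if j = i then m else a j)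
      (fun j => if j = i then a i else b j) := by
    refine hd _ _ (incube_ite ha h0 (le_trans hm (ha i).2) i)
      (incube_ite hb (ha i).1 (ha i).2 i) fun j => ?_
    by_cases h : j = i
    · simp [h, hm]
    · simp [h, hab j]
  linarith

/-- Lowering the lower corner of a box (towards `a'`) increases the volume. -/
lemma mono_lower (hd : DIncreasing C) (b : ι → ℝ) (hb : InCube b) :
    ∀ T : Finset ι, ∀ a a' : ι → ℝ, InCube a → InCube a' →
      (∀ i, a' i ≤ a i) → (∀ i, a i ≤ b i) → (∀ i ∉ T, a' i = a i) →
      boxVolume C a b ≤ boxVolume C a' b := by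
  classical
  intro T
  induction T using Finset.induction_on with
  | empty =>
      intro a a' _ _ _ _ hEq
      have : a' = a := funext fun i => hEq i (by simp)
      rw [this]
  | insert i T hi ih =>
      intro a a' ha ha' hle hab hEq
      set a'' : ι → ℝ := fun j => if j = i then a' i else a j with ha''def
      have ha'' : InCube a'' := incube_ite ha (ha' i).1 (ha' i).2 i
      have h1 : boxVolume C a b ≤ boxVolume C a'' b :=
        step_mono hd ha hb hab i (ha' i).1 (hle i)
      have h2 : boxVolume C a'' b ≤ boxVolume C a' b := by
        refine ih a'' a' ha'' ha' (fun j => ?_) (fun j => ?_) (fun j hj => ?_)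
        · by_cases h : j = i
          · simp [ha''def, h]
          · simp [ha''def, h, hle j]
        · by_cases h : j = i
          · simp only [ha''def, h, if_pos rfl]; exact le_trans (hle i) (hab i)
          · simp [ha''def, h, hab j]
        · by_cases h : j = i
          · simp [ha''def, h]
          · have hne : j ∉ insert i T := by simp [h, hj]
            simp [ha''def, h, hEq j hne]
      exact le_trans h1 h2

end Mono

section Slab

variable {ι : Type*} [Fintype ι] [DecidableEq ι]
variable {C : (ι → ℝ) → ℝ}

lemma slab_exact (hq : IsQuasiCopula ι C) (i : ι) {s t : ℝ}
    (hs0 : 0 ≤ s) (hs1 : s ≤ 1) (ht0 : 0 ≤ t) (ht1 : t ≤ 1) :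
    boxVolume C (fun j => if j = i then s else 0) (fun j => if j = i then t else 1)
      = t - s := by
  classical
  unfold boxVolume
  have hsub : ({∅, {i}} : Finset (Finset ι)) ⊆ Finset.univ := Finset.subset_univ _
  rw [← Finset.sum_subset hsub]
  · rw [Finset.sum_pair ((Finset.singleton_nonempty i).ne_empty.symm : (∅ : Finset ι) ≠ {i})]
    have e0 : (fun j => if j ∈ (∅ : Finset ι) then (if j = i then s else 0)
        else (if j = i then t else 1)) = fun j => if j = i then t else 1 := by
      funext j; simp
    have e1 : (fun j => if j ∈ ({i} : Finset ι) then (if j = i then s else 0)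
        else (if j = i then t else 1)) = fun j => if j = i then s else 1 := by
      funext j; by_cases h : j = i <;> simp [h]
    rw [e0, e1]
    have c0 : InCube (fun j => if j = i then t else (1:ℝ)) := by
      intro j; by_cases h : j = i <;> simp [h, ht0, ht1]
    have c1 : InCube (fun j => if j = i then s else (1:ℝ)) := by
      intro j; by_cases h : j = i <;> simp [h, hs0, hs1]
    have q0 : C (fun j => if j = i then t else 1) = t := by
      have := hq.one_boundary _ c0 i (fun j hj => by simp [hj])
      simpa using this
    have q1 : C (fun j => if j = i then s else 1) = s := by
      have := hq.one_boundary _ c1 i (fun j hj => by simp [hj])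
      simpa using this
    rw [q0, q1]
    simp
    ring
  · intro J _ hJ
    simp only [Finset.mem_insert, Finset.mem_singleton] at hJ
    push_neg at hJ
    obtain ⟨hJne, hJi⟩ := hJ
    have hJnonempty : J.Nonempty := hJne
    have : ∃ l ∈ J, l ≠ i := by
      by_contra hcon
      push_neg at hcon
      apply hJi
      apply Finset.eq_singleton_iff_nonempty_unique_mem.2 ⟨hJnonempty, hcon⟩
    obtain ⟨l, hlJ, hli⟩ := this
    have hc : InCube (fun j => if j ∈ J then (if j = i then s else 0)
        else (if j = i then t else 1)) := by
      intro j
      by_cases h1 : j ∈ J <;> by_cases h2 : j = i <;>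
        simp [h1, h2, hs0, hs1, ht0, ht1] <;>
        (try subst h2) <;> simp [h1, hs0, hs1, ht0, ht1]
    have : C (fun j => if j ∈ J then (if j = i then s else 0)
        else (if j = i then t else 1)) = 0 :=
      hq.zero_boundary _ hc ⟨l, by simp [hlJ, hli]⟩
    rw [this]; ring

lemma box_one (hq : IsQuasiCopula ι C) [Nonempty ι] :
    boxVolume C (fun _ => 0) (fun _ => (1:ℝ)) = 1 := by
  classical
  unfold boxVolume
  have hsub : ({∅} : Finset (Finset ι)) ⊆ Finset.univ := Finset.subset_univ _
  rw [← Finset.sum_subset hsub]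
  · rw [Finset.sum_singleton]
    have e0 : (fun j : ι => if j ∈ (∅ : Finset ι) then (0:ℝ) else 1) = fun _ => 1 := by
      funext j; simp
    rw [e0]
    have : C (fun _ => 1) = 1 := by
      have := hq.one_boundary (fun _ => 1) (fun j => by norm_num)
        (Classical.arbitrary ι) (fun j _ => rfl)
      simpa using this
    rw [this]; simp
  · intro J _ hJ
    simp only [Finset.mem_singleton] at hJ
    obtain ⟨l, hl⟩ := Finset.nonempty_iff_ne_empty.2 hJ
    have hc : InCube (fun j : ι => if j ∈ J then (0:ℝ) else 1) := by
      intro j; by_cases h : j ∈ J <;> simp [h]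
    have : C (fun j : ι => if j ∈ J then (0:ℝ) else 1) = 0 :=
      hq.zero_boundary _ hc ⟨l, by simp [hl]⟩
    rw [this]; ring

lemma step_bound (hq : IsQuasiCopula ι C) (hd : DIncreasing C)
    {a : ι → ℝ} (ha : InCube a) (i : ι) {m : ℝ} (h0 : 0 ≤ m) (hm : m ≤ a i) :
    boxVolume C (fun j => if j = i then m else a j) (fun _ => 1)
      ≤ boxVolume C a (fun _ => 1) + (a i - m) := by
  classical
  have hsplit := boxVolume_split C (fun j => if j = i then m else a j) (fun _ => (1:ℝ)) i (a i)
  have hre : (fun j => if j = i then a i else (fun j' => if j' = i then m else a j') j) = a := by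
    funext j; by_cases h : j = i <;> simp [h]
  rw [hre] at hsplit
  -- bound the slab term
  have hai1 : a i ≤ 1 := (ha i).2
  have hslabb : InCube (fun j => if j = i then a i else (fun _ => (1:ℝ)) j) := by
    intro j; by_cases h : j = i <;> simp [h, (ha i).1, (ha i).2]
  have hmono : boxVolume C (fun j => if j = i then m else a j)
        (fun j => if j = i then a i else (fun _ => (1:ℝ)) j)
      ≤ boxVolume C (fun j => if j = i then m else 0)
        (fun j => if j = i then a i else (fun _ => (1:ℝ)) j) := by
    refine mono_lower hd _ hslabb Finset.univ _ _
      (incube_ite ha h0 (le_trans hm hai1) i)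
      (incube_ite (fun _ => ⟨le_refl 0, zero_le_one⟩) h0 (le_trans hm hai1) i)
      (fun j => ?_) (fun j => ?_) (fun j hj => by simp at hj)
    · by_cases h : j = i <;> simp [h, (ha j).1]
    · by_cases h : j = i <;> simp [h, hm, (ha j).2]
  have hslab : boxVolume C (fun j => if j = i then m else 0)
      (fun j => if j = i then a i else (fun _ => (1:ℝ)) j) = a i - m := by
    have := slab_exact hq i h0 (le_trans hm hai1) (ha i).1 hai1
    convert this using 2
  linarith

/-- Telescoping: the survival volume decreases by at most `∑ (a i - a' i)` when
the lower corner is raised from `a'` to `a`. -/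
lemma lip_lower (hq : IsQuasiCopula ι C) (hd : DIncreasing C) :
    ∀ T : Finset ι, ∀ a a' : ι → ℝ, InCube a → InCube a' →
      (∀ i, a' i ≤ a i) → (∀ i ∉ T, a' i = a i) →
      boxVolume C a' (fun _ => 1) ≤ boxVolume C a (fun _ => 1) + ∑ i ∈ T, (a i - a' i) := by
  classical
  intro T
  induction T using Finset.induction_on with
  | empty =>
      intro a a' _ _ _ hEq
      have : a' = a := funext fun i => hEq i (by simp)
      rw [this]; simp
  | insert i T hi ih =>
      intro a a' ha ha' hle hEq
      set a'' : ι → ℝ := fun j => if j = i then a' i else a j with ha''def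
      have ha'' : InCube a'' := incube_ite ha (ha' i).1 (ha' i).2 i
      have h1 : boxVolume C a'' (fun _ => 1) ≤ boxVolume C a (fun _ => 1) + (a i - a' i) :=
        step_bound hq hd ha i (ha' i).1 (hle i)
      have h2 : boxVolume C a' (fun _ => 1)
          ≤ boxVolume C a'' (fun _ => 1) + ∑ j ∈ T, (a'' j - a' j) := by
        refine ih a'' a' ha'' ha' (fun j => ?_) (fun j hj => ?_)
        · by_cases h : j = i
          · simp [ha''def, h]
          · simp [ha''def, h, hle j]
        · by_cases h : j = i
          · simp [ha''def, h]
          · have hne : j ∉ insert i T := by simp [h, hj]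
            simp [ha''def, h, hEq j hne]
      have h3 : ∑ j ∈ T, (a'' j - a' j) = ∑ j ∈ T, (a j - a' j) := by
        refine Finset.sum_congr rfl fun j hj => ?_
        have h : j ≠ i := fun hc => hi (hc ▸ hj)
        simp [ha''def, h]
      rw [Finset.sum_insert hi]
      rw [h3] at h2
      linarith

end Slab

section Margin

variable {ι : Type*} [Fintype ι] [DecidableEq ι]
variable {C : (ι → ℝ) → ℝ}

lemma survivalF_eq_boxVolume (Q : (ι → ℝ) → ℝ) (u : ι → ℝ) :
    survivalF Q u = boxVolume Q u (fun _ => 1) := rfl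

lemma margin_survival (hq : IsQuasiCopula ι C) (S : Finset ι) (v : ↥S → ℝ)
    (hv : InCube v) :
    survivalF (marginQ C S) v
      = boxVolume C (fun i => if h : i ∈ S then v ⟨i, h⟩ else 0) (fun _ => 1) := by
  classical
  unfold survivalF boxVolume marginQ
  rw [← Finset.sum_subset (Finset.subset_univ S.powerset)]
  · refine Finset.sum_nbij' (fun K : Finset ↥S => K.map (Function.Embedding.subtype _))
      (fun J => J.subtype (· ∈ S)) ?_ ?_ ?_ ?_ ?_
    · intro K _
      simp only [Finset.mem_powerset]
      intro x hx
      simp only [Finset.mem_map, Function.Embedding.coe_subtype] at hx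
      obtain ⟨y, _, rfl⟩ := hx
      exact y.2
    · intro J _; exact Finset.mem_univ _
    · intro K _
      ext x
      simp only [Finset.mem_subtype, Finset.mem_map, Function.Embedding.coe_subtype]
      constructor
      · rintro ⟨y, hy, hyx⟩; exact Subtype.ext hyx ▸ hy
      · intro hx; exact ⟨x, hx, rfl⟩
    · intro J hJ
      simp only [Finset.mem_univ, Finset.mem_powerset] at hJ
      rw [Finset.subtype_map]
      exact Finset.filter_true_of_mem fun x hx => hJ hx
    · intro K _
      rw [Finset.card_map]
      congr 1
      congr 1
      funext i
      by_cases h : i ∈ S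
      · by_cases hK : (⟨i, h⟩ : ↥S) ∈ K
        · have : i ∈ K.map (Function.Embedding.subtype _) := by
            simp [Finset.mem_map, Function.Embedding.coe_subtype]
            exact ⟨h, hK⟩
          simp [h, hK, this]
        · have : i ∉ K.map (Function.Embedding.subtype _) := by
            simp only [Finset.mem_map, Function.Embedding.coe_subtype]
            rintro ⟨y, hy, hval⟩
            exact hK (by cases y; cases hval; exact hy)
          simp [h, hK, this]
      · have : i ∉ K.map (Function.Embedding.subtype _) := by
          simp only [Finset.mem_map, Function.Embedding.coe_subtype]
          rintro ⟨y, -, rfl⟩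
          exact h y.2
        simp [h, this]
  · intro J _ hJ
    simp only [Finset.mem_powerset] at hJ
    obtain ⟨l, hlJ, hlS⟩ := Finset.not_subset.1 hJ
    have hc : InCube (fun i => if i ∈ J then (if h : i ∈ S then v ⟨i, h⟩ else 0) else 1) := by
      intro i
      by_cases h1 : i ∈ J
      · by_cases h2 : i ∈ S
        · simpa [h1, h2] using hv ⟨i, h2⟩
        · simp [h1, h2]
      · simp [h1]
    have : C (fun i => if i ∈ J then (if h : i ∈ S then v ⟨i, h⟩ else 0) else 1) = 0 :=
      hq.zero_boundary _ hc ⟨l, by simp [hlJ, hlS]⟩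
    rw [this]; ring

end Margin

/-- bounds on the survival function of a copula whose margins'
survival functions lie between those of given quasi-copulas. -/
theorem stmt17 (d k : ℕ) (hd : 2 ≤ d) (hk : 0 < k) (J : Fin k → Finset (Fin d))
    (hcard : ∀ j, 2 ≤ (J j).card)
    (hinter : ∀ i j, i ≠ j → ((J i) ∩ (J j)).card ≤ 1)
    (Ql Qu : (j : Fin k) → ((↥(J j) → ℝ) → ℝ))
    (hQl : ∀ j, IsQuasiCopula ↥(J j) (Ql j)) (hQu : ∀ j, IsQuasiCopula ↥(J j) (Qu j))
    (hle : ∀ j, ∀ v : ↥(J j) → ℝ, InCube v → survivalF (Ql j) v ≤ survivalF (Qu j) v)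
    (C : (Fin d → ℝ) → ℝ) (hC : IsCopula (Fin d) C)
    (hmar : ∀ j, ∀ v : ↥(J j) → ℝ, InCube v →
      survivalF (Ql j) v ≤ survivalF (marginQ C (J j)) v ∧
        survivalF (marginQ C (J j)) v ≤ survivalF (Qu j) v)
    (u : Fin d → ℝ) (hu : InCube u) :
    max (⨆ j, (survivalF (Ql j) (fun i => u i.val) - ∑ l ∈ (J j)ᶜ, u l))
        (Wd (fun i => 1 - u i)) ≤ survivalF C u ∧
    survivalF C u ≤
      min (⨅ j, survivalF (Qu j) (fun i => u i.val)) (Md (fun i => 1 - u i)) := by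
  classical
  obtain ⟨hqC, hdC⟩ := hC
  haveI : Nonempty (Fin k) := ⟨⟨0, hk⟩⟩
  haveI : Nonempty (Fin d) := ⟨⟨0, by omega⟩⟩
  have hone : InCube (fun _ : Fin d => (1:ℝ)) := fun _ => by norm_num
  have hzero : InCube (fun _ : Fin d => (0:ℝ)) := fun _ => by norm_num
  have hCu : survivalF C u = boxVolume C u (fun _ => 1) := rfl
  -- per-margin data
  have key : ∀ j : Fin k,
      survivalF (marginQ C (J j)) (fun i => u i.val)
        = boxVolume C (fun i => if h : i ∈ J j then u i else 0) (fun _ => 1) ∧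
      InCube (fun i : Fin d => if h : i ∈ J j then u i else 0) ∧
      (∀ i, (if h : i ∈ J j then u i else 0) ≤ u i) := by
    intro j
    have hv : InCube (fun i : ↥(J j) => u i.val) := fun i => hu i.val
    refine ⟨margin_survival hqC (J j) _ hv, fun i => ?_, fun i => ?_⟩
    · by_cases h : i ∈ J j
      · simpa [h] using hu i
      · simp [h]
    · by_cases h : i ∈ J j
      · simp [h]
      · simp [h, (hu i).1]
  have hsum : ∀ j : Fin k,
      (∑ i, (u i - (if h : i ∈ J j then u i else 0))) = ∑ l ∈ (J j)ᶜ, u l := by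
    intro j
    rw [← Finset.sum_subset (Finset.subset_univ (J j)ᶜ)]
    · refine Finset.sum_congr rfl fun l hl => ?_
      have : l ∉ J j := Finset.mem_compl.1 hl
      simp [this]
    · intro i _ hi
      have : i ∈ J j := by simpa [Finset.mem_compl] using hi
      simp [this]
  constructor
  · -- lower bound
    refine max_le ?_ ?_
    · refine ciSup_le fun j => ?_
      obtain ⟨hms, hcube, hlequ⟩ := key j
      have hv : InCube (fun i : ↥(J j) => u i.val) := fun i => hu i.val
      have h1 := (hmar j _ hv).1
      have h2 := lip_lower hqC hdC Finset.univ u _ hu hcube hlequ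
        (fun i hi => absurd (Finset.mem_univ i) hi)
      rw [hsum j] at h2
      rw [hCu]
      rw [hms] at h1
      linarith
    · refine max_le ?_ ?_
      · rw [hCu]
        exact hdC u _ hu hone fun i => (hu i).2
      · have h2 := lip_lower hqC hdC Finset.univ u (fun _ => 0) hu hzero
          (fun i => (hu i).1) (fun i hi => absurd (Finset.mem_univ i) hi)
        rw [box_one hqC] at h2
        have hsums : (∑ i, (1 - u i)) - (Fintype.card (Fin d) : ℝ) + 1
            = 1 - ∑ i, u i := by
          rw [Finset.sum_sub_distrib]
          simp [Finset.card_univ]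
          ring
        rw [hsums, hCu]
        have : ∑ i, (u i - (fun _ => (0:ℝ)) i) = ∑ i, u i := by simp
        rw [this] at h2
        linarith
  · -- upper bound
    refine le_min ?_ ?_
    · refine le_ciInf fun j => ?_
      obtain ⟨hms, hcube, hlequ⟩ := key j
      have hv : InCube (fun i : ↥(J j) => u i.val) := fun i => hu i.val
      have h1 := (hmar j _ hv).2
      have h2 := mono_lower hdC (fun _ => 1) hone Finset.univ u _ hu hcube hlequ
        (fun i => (hu i).2) (fun i hi => absurd (Finset.mem_univ i) hi)
      rw [hms] at h1
      rw [hCu]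
      linarith
    · refine le_csInf (Set.range_nonempty _) ?_
      rintro b ⟨i, rfl⟩
      have hcube : InCube (fun j : Fin d => if j = i then u i else 0) := by
        intro l
        by_cases h : l = i
        · simpa [h] using hu i
        · simp [h]
      have h2 := mono_lower hdC (fun _ => 1) hone Finset.univ u
        (fun j => if j = i then u i else 0) hu hcube
        (fun l => by by_cases h : l = i <;> simp [h, (hu l).1])
        (fun l => (hu l).2) (fun l hl => absurd (Finset.mem_univ l) hl)
      have hslab := slab_exact hqC i (hu i).1 (hu i).2 zero_le_one le_rfl
      have hb1 : (fun j : Fin d => if j = i then (1:ℝ) else 1) = fun _ => 1 :=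
        funext fun j => ite_self _
      rw [hb1] at hslab
      rw [hCu]
      rw [hslab] at h2
      exact h2
end
end

section
/- Let d ≥ 2 and let f : ℝ_+^d → ℝ be componentwise right-continuous and either Δ-antitonic or Δ-monotonic. Let ν be a Borel probability measure on ℝ_+^d and, for i = 1, …, d, let ν_i denote its i-th marginal (the pushforward of ν under the i-th coordinate projection). For a nonempty subset J ⊆ {1, …, d}, let f_J : ℝ_+^{|J|} → ℝ denote the J-margin of f, obtained from f by setting all coordinates outside J equal to 0. If Σ_{∅ ≠ J ⊆ {1,…,d}} Σ_{i=1}^d ∫_{ℝ_+} |f_J(x, …, x)| ν_i(dx) < ∞ (where f_J(x, …, x) is f_J evaluated on the diagonal), then f is ν-integrable, i.e. ∫_{ℝ_+^d} |f| dν < ∞. -/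
open scoped BigOperators NNReal ENNReal
open MeasureTheory

/-- The iterated finite difference of `f` over the coordinates in `J`, from `a` to `b`,
with the remaining coordinates given by `x`:
`Δ_J f(x) = Σ_{K ⊆ J} (−1)^{|J| − |K|} f(x[K ↦ b, J\K ↦ a])`. -/
noncomputable def deltaDiff {d : ℕ} (f : (Fin d → ℝ≥0) → ℝ) (J : Finset (Fin d))
    (a b x : Fin d → ℝ≥0) : ℝ :=
  ∑ K ∈ J.powerset, (-1 : ℝ) ^ (J.card - K.card) *
    f (fun i => if i ∈ K then b i else if i ∈ J then a i else x i)

/-- `f` is Δ-monotonic: all iterated differences over at least two coordinates are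
nonnegative. -/
def DeltaMonotone {d : ℕ} (f : (Fin d → ℝ≥0) → ℝ) : Prop :=
  ∀ J : Finset (Fin d), 2 ≤ J.card → ∀ a b x : Fin d → ℝ≥0,
    (∀ i ∈ J, a i < b i) → 0 ≤ deltaDiff f J a b x

/-- `f` is Δ-antitonic: all iterated differences over `n ≥ 2` coordinates have
sign `(−1)^n`. -/
def DeltaAntitone {d : ℕ} (f : (Fin d → ℝ≥0) → ℝ) : Prop :=
  ∀ J : Finset (Fin d), 2 ≤ J.card → ∀ a b x : Fin d → ℝ≥0,
    (∀ i ∈ J, a i < b i) → 0 ≤ (-1 : ℝ) ^ J.card * deltaDiff f J a b x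

namespace Stmt19

variable {d : ℕ}

lemma neg_one_pow_sub {m k : ℕ} (h : k ≤ m) : (-1 : ℝ) ^ (m - k) = (-1) ^ m * (-1) ^ k := by
  have h2 : ((-1 : ℝ)) ^ k * (-1) ^ k = 1 := by
    rw [← pow_add, ← two_mul, pow_mul]; norm_num
  calc (-1 : ℝ) ^ (m - k) = (-1) ^ (m - k) * ((-1) ^ k * (-1) ^ k) := by rw [h2, mul_one]
    _ = (-1) ^ (m - k + k) * (-1) ^ k := by rw [← mul_assoc, ← pow_add]
    _ = (-1) ^ m * (-1) ^ k := by rw [Nat.sub_add_cancel h]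

lemma dd_congr (f : (Fin d → ℝ≥0) → ℝ) {J : Finset (Fin d)} {a a' b b' x x' : Fin d → ℝ≥0}
    (ha : ∀ i ∈ J, a i = a' i) (hb : ∀ i ∈ J, b i = b' i) (hx : ∀ i ∉ J, x i = x' i) :
    deltaDiff f J a b x = deltaDiff f J a' b' x' := by
  unfold deltaDiff
  refine Finset.sum_congr rfl fun K hK => ?_
  rw [Finset.mem_powerset] at hK
  congr 2
  funext i
  by_cases hiK : i ∈ K
  · simp [hiK, hb i (hK hiK)]
  · by_cases hiJ : i ∈ J
    · simp [hiK, hiJ, ha i hiJ]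
    · simp [hiK, hiJ, hx i hiJ]

lemma dd_empty (f : (Fin d → ℝ≥0) → ℝ) (a b x : Fin d → ℝ≥0) :
    deltaDiff f ∅ a b x = f x := by
  simp [deltaDiff]

lemma dd_add (g h : (Fin d → ℝ≥0) → ℝ) (J : Finset (Fin d)) (a b x : Fin d → ℝ≥0) :
    deltaDiff (fun y => g y + h y) J a b x = deltaDiff g J a b x + deltaDiff h J a b x := by
  simp [deltaDiff, mul_add, Finset.sum_add_distrib]

lemma dd_rec' (f : (Fin d → ℝ≥0) → ℝ) {s : Finset (Fin d)} {j : Fin d} (hj : j ∉ s)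
    (a b x : Fin d → ℝ≥0) :
    deltaDiff f (insert j s) a b x =
      deltaDiff (fun y => f (Function.update y j (b j)) - f (Function.update y j (a j)))
        s a b x := by
  classical
  unfold deltaDiff
  rw [Finset.sum_powerset_insert hj]
  have hcard : (insert j s).card = s.card + 1 := Finset.card_insert_of_notMem hj
  simp only [mul_sub, Finset.sum_sub_distrib]
  rw [sub_eq_add_neg, ← Finset.sum_neg_distrib, add_comm]
  congr 1
  · refine Finset.sum_congr rfl fun K hK => ?_
    rw [Finset.mem_powerset] at hK
    have hjK : j ∉ K := fun h => hj (hK h)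
    have hcard2 : (insert j K).card = K.card + 1 := Finset.card_insert_of_notMem hjK
    have hKc : K.card ≤ s.card := Finset.card_le_card hK
    have hsgn : (insert j s).card - (insert j K).card = s.card - K.card := by
      rw [hcard, hcard2]; omega
    rw [hsgn]
    congr 2
    funext i
    rcases eq_or_ne i j with rfl | hij
    · simp
    · simp [Function.update_of_ne hij, Finset.mem_insert, hij]
  · refine Finset.sum_congr rfl fun K hK => ?_
    rw [Finset.mem_powerset] at hK
    have hjK : j ∉ K := fun h => hj (hK h)
    have hKc : K.card ≤ s.card := Finset.card_le_card hK
    have hsgn : (-1 : ℝ) ^ ((insert j s).card - K.card) = -(-1 : ℝ) ^ (s.card - K.card) := by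
      rw [hcard, show s.card + 1 - K.card = (s.card - K.card) + 1 by omega, pow_succ]
      ring
    rw [hsgn]
    have hfun : (fun i => if i ∈ K then b i else if i ∈ insert j s then a i else x i)
        = Function.update (fun i => if i ∈ K then b i else if i ∈ s then a i else x i) j (a j) := by
      funext i
      rcases eq_or_ne i j with rfl | hij
      · simp [hjK]
      · simp [Function.update_of_ne hij, Finset.mem_insert, hij]
    rw [hfun]
    ring

lemma dd_rec (f : (Fin d → ℝ≥0) → ℝ) {J : Finset (Fin d)} {j : Fin d} (hj : j ∈ J)
    (a b x : Fin d → ℝ≥0) :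
    deltaDiff f J a b x =
      deltaDiff (fun y => f (Function.update y j (b j)) - f (Function.update y j (a j)))
        (J.erase j) a b x := by
  classical
  have h := dd_rec' f (Finset.notMem_erase j J) a b x
  rw [Finset.insert_erase hj] at h
  exact h

lemma dd_degen (f : (Fin d → ℝ≥0) → ℝ) {J : Finset (Fin d)} {j : Fin d} (hj : j ∈ J)
    {a b : Fin d → ℝ≥0} (hab : a j = b j) (x : Fin d → ℝ≥0) :
    deltaDiff f J a b x = 0 := by
  rw [dd_rec f hj, hab]
  simp [deltaDiff]

lemma dd_split (f : (Fin d → ℝ≥0) → ℝ) {J : Finset (Fin d)} {j : Fin d} (hj : j ∈ J)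
    (a b x : Fin d → ℝ≥0) (c : ℝ≥0) :
    deltaDiff f J a b x =
      deltaDiff f J (Function.update a j c) b x + deltaDiff f J a (Function.update b j c) x := by
  classical
  rw [dd_rec f hj a b x, dd_rec f hj (Function.update a j c) b x,
    dd_rec f hj a (Function.update b j c) x]
  rw [show (deltaDiff (fun y => f (Function.update y j (b j))
        - f (Function.update y j (Function.update a j c j))) (J.erase j)
        (Function.update a j c) b x)
      = deltaDiff (fun y => f (Function.update y j (b j)) - f (Function.update y j c))
        (J.erase j) a b x from by
    rw [Function.update_self]
    exact dd_congr _ (fun i hi => (Function.update_of_ne (Finset.ne_of_mem_erase hi) _ _))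
      (fun _ _ => rfl) (fun _ _ => rfl)]
  rw [show (deltaDiff (fun y => f (Function.update y j (Function.update b j c j))
        - f (Function.update y j (a j))) (J.erase j) a (Function.update b j c) x)
      = deltaDiff (fun y => f (Function.update y j c) - f (Function.update y j (a j)))
        (J.erase j) a b x from by
    rw [Function.update_self]
    exact dd_congr _ (fun _ _ => rfl)
      (fun i hi => (Function.update_of_ne (Finset.ne_of_mem_erase hi) _ _)) (fun _ _ => rfl)]
  rw [← dd_add]
  congr 1
  funext y
  ring

lemma dd_pair (f : (Fin d → ℝ≥0) → ℝ) {j l : Fin d} (hjl : j ≠ l) (a b x : Fin d → ℝ≥0) :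
    deltaDiff f {j, l} a b x =
      f (Function.update (Function.update x l (b l)) j (b j))
      - f (Function.update (Function.update x l (b l)) j (a j))
      - f (Function.update (Function.update x l (a l)) j (b j))
      + f (Function.update (Function.update x l (a l)) j (a j)) := by
  classical
  have h1 : ({j, l} : Finset (Fin d)) = insert j {l} := rfl
  have hj : j ∉ ({l} : Finset (Fin d)) := by simp [hjl]
  have hl : l ∉ (∅ : Finset (Fin d)) := by simp
  rw [h1, dd_rec' f hj, show ({l} : Finset (Fin d)) = insert l ∅ from rfl, dd_rec' _ hl,
    dd_empty]
  ring

lemma dd_mobius (f : (Fin d → ℝ≥0) → ℝ) (a b : Fin d → ℝ≥0) :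
    f b = ∑ J ∈ (Finset.univ : Finset (Fin d)).powerset, deltaDiff f J a b a := by
  classical
  have hterm : ∀ J : Finset (Fin d), deltaDiff f J a b a
      = ∑ K ∈ J.powerset, ((-1 : ℝ) ^ J.card * (-1) ^ K.card)
          * f (fun i => if i ∈ K then b i else a i) := by
    intro J
    unfold deltaDiff
    refine Finset.sum_congr rfl fun K hK => ?_
    rw [Finset.mem_powerset] at hK
    rw [neg_one_pow_sub (Finset.card_le_card hK)]
    congr 2
    funext i
    by_cases hiK : i ∈ K
    · simp [hiK]
    · by_cases hiJ : i ∈ J <;> simp [hiK, hiJ]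
  simp only [hterm]
  rw [Finset.sum_comm' (t' := (Finset.univ : Finset (Fin d)).powerset)
    (s' := fun K => (Finset.univ : Finset (Fin d)).powerset.filter (fun J => K ⊆ J))
    (by
      intro J K
      simp [Finset.mem_powerset, Finset.mem_filter, Finset.subset_univ])]
  have hinner : ∀ K : Finset (Fin d),
      ∑ J ∈ (Finset.univ : Finset (Fin d)).powerset.filter (fun J => K ⊆ J),
        ((-1 : ℝ) ^ J.card * (-1) ^ K.card) * f (fun i => if i ∈ K then b i else a i)
      = (if K = Finset.univ then (1 : ℝ) else 0) * f (fun i => if i ∈ K then b i else a i) := by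
    intro K
    have hsplit : ∑ J ∈ (Finset.univ : Finset (Fin d)).powerset.filter (fun J => K ⊆ J),
        ((-1 : ℝ) ^ J.card * (-1) ^ K.card) * f (fun i => if i ∈ K then b i else a i)
      = ((∑ J ∈ (Finset.univ : Finset (Fin d)).powerset.filter (fun J => K ⊆ J),
          ((-1 : ℝ) ^ J.card)) * (-1) ^ K.card) * f (fun i => if i ∈ K then b i else a i) := by
      rw [Finset.sum_mul, Finset.sum_mul]
    rw [hsplit]
    congr 1
    have hbij : ∑ J ∈ (Finset.univ : Finset (Fin d)).powerset.filter (fun J => K ⊆ J),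
        ((-1 : ℝ) ^ J.card)
        = ∑ L ∈ (Finset.univ \ K).powerset, (-1 : ℝ) ^ (K ∪ L).card := by
      refine Finset.sum_nbij' (fun J => J \ K) (fun L => K ∪ L) ?_ ?_ ?_ ?_ ?_
      · intro J hJ
        simp only [Finset.mem_filter, Finset.mem_powerset] at hJ ⊢
        exact Finset.sdiff_subset_sdiff (Finset.subset_univ J) le_rfl
      · intro L hL
        simp only [Finset.mem_powerset] at hL
        simp only [Finset.mem_filter, Finset.mem_powerset]
        exact ⟨Finset.subset_univ _, Finset.subset_union_left⟩
      · intro J hJ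
        simp only [Finset.mem_filter, Finset.mem_powerset] at hJ
        show K ∪ J \ K = J
        exact Finset.union_sdiff_of_subset hJ.2
      · intro L hL
        simp only [Finset.mem_powerset] at hL
        show (K ∪ L) \ K = L
        rw [Finset.union_sdiff_cancel_left]
        exact Finset.disjoint_left.mpr fun i hiK hiL => ((Finset.mem_sdiff.1 (hL hiL)).2 hiK)
      · intro J hJ
        simp only [Finset.mem_filter, Finset.mem_powerset] at hJ
        show _ = (-1 : ℝ) ^ (K ∪ J \ K).card
        rw [Finset.union_sdiff_of_subset hJ.2]
    rw [hbij]
    have hdisj : ∀ L ∈ (Finset.univ \ K).powerset, Disjoint K L := by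
      intro L hL
      rw [Finset.mem_powerset] at hL
      exact Finset.disjoint_left.mpr fun i hiK hiL => ((Finset.mem_sdiff.1 (hL hiL)).2 hiK)
    have hpow : ∑ L ∈ (Finset.univ \ K).powerset, (-1 : ℝ) ^ (K ∪ L).card
        = (-1 : ℝ) ^ K.card * (if K = Finset.univ then 1 else 0) := by
      calc ∑ L ∈ (Finset.univ \ K).powerset, (-1 : ℝ) ^ (K ∪ L).card
          = ∑ L ∈ (Finset.univ \ K).powerset, (-1 : ℝ) ^ K.card * (-1) ^ L.card := by
            refine Finset.sum_congr rfl fun L hL => ?_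
            rw [Finset.card_union_of_disjoint (hdisj L hL), pow_add]
        _ = (-1 : ℝ) ^ K.card * ∑ L ∈ (Finset.univ \ K).powerset, ((-1 : ℝ)) ^ L.card := by
            rw [Finset.mul_sum]
        _ = (-1 : ℝ) ^ K.card * (if (Finset.univ \ K : Finset (Fin d)) = ∅ then 1 else 0) := by
            congr 1
            have := Finset.sum_powerset_neg_one_pow_card (x := (Finset.univ \ K : Finset (Fin d)))
            exact_mod_cast congrArg (fun z : ℤ => (z : ℝ)) this
        _ = (-1 : ℝ) ^ K.card * (if K = Finset.univ then 1 else 0) := by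
            congr 1
            have : (Finset.univ \ K : Finset (Fin d)) = ∅ ↔ K = Finset.univ := by
              rw [Finset.sdiff_eq_empty_iff_subset]
              exact ⟨fun h => Finset.univ_subset_iff.mp h, fun h => by rw [h]⟩
            simp [this]
    rw [hpow]
    have h2 : ((-1 : ℝ)) ^ K.card * (-1) ^ K.card = 1 := by
      rw [← pow_add, ← two_mul, pow_mul]; norm_num
    split_ifs with h
    · rw [mul_one, h2]
    · ring
  simp only [hinner]
  rw [Finset.sum_eq_single Finset.univ]
  · simp
  · intro K _ hK
    rw [if_neg hK, zero_mul]
  · intro h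
    exact absurd (Finset.mem_powerset.2 (Finset.subset_univ _)) h

section Sign

variable (f : (Fin d → ℝ≥0) → ℝ) (σ : Finset (Fin d) → ℝ)

lemma dd_sign_nonneg
    (hσ3 : ∀ (J : Finset (Fin d)) (a b x : Fin d → ℝ≥0), 2 ≤ J.card →
      (∀ i ∈ J, a i < b i) → 0 ≤ σ J * deltaDiff f J a b x)
    {J : Finset (Fin d)} {a b x : Fin d → ℝ≥0} (hJ : 2 ≤ J.card)
    (hab : ∀ i ∈ J, a i ≤ b i) : 0 ≤ σ J * deltaDiff f J a b x := by
  by_cases h : ∀ i ∈ J, a i < b i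
  · exact hσ3 J a b x hJ h
  · push_neg at h
    obtain ⟨i, hiJ, hba⟩ := h
    have hai : a i = b i := le_antisymm (hab i hiJ) hba
    rw [dd_degen f hiJ hai, mul_zero]

lemma dd_mono
    (hσ3 : ∀ (J : Finset (Fin d)) (a b x : Fin d → ℝ≥0), 2 ≤ J.card →
      (∀ i ∈ J, a i < b i) → 0 ≤ σ J * deltaDiff f J a b x)
    {J : Finset (Fin d)} (hJ : 2 ≤ J.card) {y z : Fin d → ℝ≥0} (hyz : ∀ i, y i ≤ z i) :
    σ J * deltaDiff f J 0 y 0 ≤ σ J * deltaDiff f J 0 z 0 := by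
  classical
  have key : ∀ S : Finset (Fin d), S ⊆ J →
      σ J * deltaDiff f J 0 y 0 ≤
        σ J * deltaDiff f J 0 (fun i => if i ∈ S then z i else y i) 0 := by
    intro S
    induction S using Finset.induction_on with
    | empty =>
      intro _
      have h0 : (fun i => if i ∈ (∅ : Finset (Fin d)) then z i else y i) = y := by
        funext i; simp
      rw [h0]
    | @insert j S hjS ih =>
      intro hsub
      have hjJ : j ∈ J := hsub (Finset.mem_insert_self j S)
      have hS : S ⊆ J := fun i hi => hsub (Finset.mem_insert_of_mem hi)
      set w : Fin d → ℝ≥0 := fun i => if i ∈ S then z i else y i with hw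
      have hw' : (fun i => if i ∈ insert j S then z i else y i) = Function.update w j (z j) := by
        funext i
        rcases eq_or_ne i j with rfl | hij
        · simp [hw, hjS]
        · simp [Function.update_of_ne hij, Finset.mem_insert, hij, hw]
      rw [hw']
      have hsplit := dd_split f hjJ 0 (Function.update w j (z j)) 0 (y j)
      have hupd : Function.update (Function.update w j (z j)) j (y j) = w := by
        rw [Function.update_idem, show y j = w j from by simp [hw, hjS],
          Function.update_eq_self]
      rw [hupd] at hsplit
      have h1 : 0 ≤ σ J * deltaDiff f J (Function.update 0 j (y j))
          (Function.update w j (z j)) 0 := by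
        refine dd_sign_nonneg f σ hσ3 hJ fun i hiJ => ?_
        rcases eq_or_ne i j with rfl | hij
        · simp only [Function.update_self]
          exact hyz i
        · simp only [Function.update_of_ne hij]
          exact zero_le
      have h2 := congrArg (fun t => σ J * t) hsplit
      simp only [mul_add] at h2
      have h3 := ih hS
      linarith
  have hfin := key J (Finset.Subset.refl J)
  have hcong : deltaDiff f J 0 (fun i => if i ∈ J then z i else y i) 0
      = deltaDiff f J 0 z 0 :=
    dd_congr f (fun _ _ => rfl) (fun i hi => by simp [hi]) (fun _ _ => rfl)
  rwa [hcong] at hfin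

lemma single_diff_mono
    (hσ1 : ∀ J : Finset (Fin d), σ J = 1 ∨ σ J = -1)
    (hσ2 : ∀ J : Finset (Fin d), J.card = 2 → σ J = 1)
    (hσ3 : ∀ (J : Finset (Fin d)) (a b x : Fin d → ℝ≥0), 2 ≤ J.card →
      (∀ i ∈ J, a i < b i) → 0 ≤ σ J * deltaDiff f J a b x)
    {j : Fin d} {aj bj : ℝ≥0} (hab : aj ≤ bj) {w w' : Fin d → ℝ≥0}
    (hww' : ∀ l, w l ≤ w' l) :
    f (Function.update w j bj) - f (Function.update w j aj)
      ≤ f (Function.update w' j bj) - f (Function.update w' j aj) := by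
  classical
  have key : ∀ S : Finset (Fin d), j ∉ S →
      f (Function.update w j bj) - f (Function.update w j aj)
        ≤ f (Function.update (fun l => if l ∈ S then w' l else w l) j bj)
          - f (Function.update (fun l => if l ∈ S then w' l else w l) j aj) := by
    intro S
    induction S using Finset.induction_on with
    | empty =>
      intro _
      have h0 : (fun l => if l ∈ (∅ : Finset (Fin d)) then w' l else w l) = w := by
        funext l; simp
      rw [h0]
    | @insert l S hlS ih =>
      intro hjS
      have hjl : j ≠ l := fun h => hjS (h ▸ Finset.mem_insert_self l S)
      have hjS' : j ∉ S := fun h => hjS (Finset.mem_insert_of_mem h)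
      set m : Fin d → ℝ≥0 := fun i => if i ∈ S then w' i else w i with hm
      have hm' : (fun i => if i ∈ insert l S then w' i else w i)
          = Function.update m l (w' l) := by
        funext i
        rcases eq_or_ne i l with rfl | hil
        · simp [hm, hlS]
        · simp [Function.update_of_ne hil, Finset.mem_insert, hil, hm]
      rw [hm']
      have hpair := dd_pair f hjl (Function.update w j aj) (Function.update w' j bj) m
      have hBl : Function.update w' j bj l = w' l := Function.update_of_ne hjl.symm _ _
      have hAl : Function.update w j aj l = w l := Function.update_of_ne hjl.symm _ _
      have hBj : Function.update w' j bj j = bj := Function.update_self _ _ _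
      have hAj : Function.update w j aj j = aj := Function.update_self _ _ _
      rw [hBl, hAl, hBj, hAj] at hpair
      have hml : Function.update m l (w l) = m := by
        rw [show w l = m l from by simp [hm, hlS], Function.update_eq_self]
      rw [hml] at hpair
      have hcard : ({j, l} : Finset (Fin d)).card = 2 := by
        rw [Finset.card_insert_of_notMem (by simp [hjl]), Finset.card_singleton]
      have hnn : 0 ≤ σ {j, l} * deltaDiff f {j, l}
          (Function.update w j aj) (Function.update w' j bj) m := by
        refine dd_sign_nonneg f σ hσ3 (by rw [hcard]) fun i hi => ?_
        rcases Finset.mem_insert.1 hi with rfl | hi'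
        · rw [hAj, hBj]; exact hab
        · rw [Finset.mem_singleton] at hi'
          subst hi'
          rw [hAl, hBl]; exact hww' i
      rw [hσ2 _ hcard, one_mul] at hnn
      have h3 := ih hjS'
      linarith
  have hfin := key (Finset.univ.erase j) (Finset.notMem_erase j Finset.univ)
  have hup : ∀ c : ℝ≥0, Function.update
      (fun l => if l ∈ Finset.univ.erase j then w' l else w l) j c
      = Function.update w' j c := by
    intro c
    funext i
    rcases eq_or_ne i j with rfl | hij
    · simp
    · simp [Function.update_of_ne hij, Finset.mem_erase, hij]
  rw [hup, hup] at hfin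
  exact hfin

end Sign

section Bound

variable (f : (Fin d → ℝ≥0) → ℝ) (σ : Finset (Fin d) → ℝ)

lemma T_bound [Nonempty (Fin d)]
    (hσ1 : ∀ J : Finset (Fin d), σ J = 1 ∨ σ J = -1)
    (hσ3 : ∀ (J : Finset (Fin d)) (a b x : Fin d → ℝ≥0), 2 ≤ J.card →
      (∀ i ∈ J, a i < b i) → 0 ≤ σ J * deltaDiff f J a b x)
    (J : Finset (Fin d)) (x : Fin d → ℝ≥0) :
    |deltaDiff f J 0 x 0| ≤ ∑ K ∈ J.powerset, ∑ i : Fin d,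
      |f (fun l => if l ∈ K then x i else 0)| := by
  classical
  by_cases hJ2 : 2 ≤ J.card
  · -- the main case
    obtain ⟨i₀, -, hi₀⟩ := Finset.exists_max_image Finset.univ x Finset.univ_nonempty
    set z : Fin d → ℝ≥0 := fun _ => x i₀ with hz
    obtain ⟨j, hj⟩ := Finset.card_pos.mp (by omega : 0 < J.card)
    have hdd0 : deltaDiff f J 0 0 0 = 0 := dd_degen f hj rfl 0
    have hnn0 : 0 ≤ σ J * deltaDiff f J 0 x 0 := by
      have := dd_mono f σ hσ3 hJ2 (y := 0) (z := x) (fun i => zero_le)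
      rwa [hdd0, mul_zero] at this
    have hup : σ J * deltaDiff f J 0 x 0 ≤ σ J * deltaDiff f J 0 z 0 :=
      dd_mono f σ hσ3 hJ2 (fun i => hi₀ i (Finset.mem_univ i))
    have habs : |deltaDiff f J 0 x 0| ≤ σ J * deltaDiff f J 0 z 0 := by
      rcases hσ1 J with h | h <;> rw [h] at hnn0 hup ⊢ <;>
        simp only [one_mul, neg_one_mul] at hnn0 hup ⊢ <;>
        exact abs_le.2 ⟨by linarith, by linarith⟩
    have hsz : σ J * deltaDiff f J 0 z 0 ≤ |deltaDiff f J 0 z 0| := by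
      rcases hσ1 J with h | h <;> rw [h]
      · rw [one_mul]; exact le_abs_self _
      · rw [neg_one_mul]; exact neg_le_abs _
    have hddz : |deltaDiff f J 0 z 0| ≤ ∑ K ∈ J.powerset,
        |f (fun l => if l ∈ K then x i₀ else 0)| := by
      unfold deltaDiff
      refine le_trans (Finset.abs_sum_le_sum_abs _ _) (Finset.sum_le_sum fun K hK => ?_)
      rw [abs_mul, abs_pow, abs_neg, abs_one, one_pow, one_mul]
      have : (fun i => if i ∈ K then z i else if i ∈ J then (0 : Fin d → ℝ≥0) i else
          (0 : Fin d → ℝ≥0) i) = fun l => if l ∈ K then x i₀ else 0 := by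
        funext i
        by_cases hiK : i ∈ K
        · simp [hiK, hz]
        · by_cases hiJ : i ∈ J <;> simp [hiK, hiJ]
      rw [this]
    have hlast : ∀ K ∈ J.powerset, |f (fun l => if l ∈ K then x i₀ else 0)|
        ≤ ∑ i : Fin d, |f (fun l => if l ∈ K then x i else 0)| :=
      fun K _ => Finset.single_le_sum
        (f := fun i : Fin d => |f (fun l => if l ∈ K then x i else 0)|)
        (fun i _ => abs_nonneg _) (Finset.mem_univ i₀)
    calc |deltaDiff f J 0 x 0| ≤ σ J * deltaDiff f J 0 z 0 := habs
      _ ≤ |deltaDiff f J 0 z 0| := hsz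
      _ ≤ ∑ K ∈ J.powerset, |f (fun l => if l ∈ K then x i₀ else 0)| := hddz
      _ ≤ _ := Finset.sum_le_sum hlast
  · interval_cases h : J.card
    · -- J = ∅
      rw [Finset.card_eq_zero] at h
      subst h
      rw [dd_empty, Finset.powerset_empty, Finset.sum_singleton]
      have h0 : ∀ i : Fin d, (fun l => if l ∈ (∅ : Finset (Fin d)) then x i else 0)
          = (0 : Fin d → ℝ≥0) := by intro i; funext l; simp
      calc |f 0| ≤ ∑ i : Fin d, |f 0| :=
            Finset.single_le_sum (f := fun _ : Fin d => |f 0|) (fun i _ => abs_nonneg _)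
              (Finset.mem_univ (Classical.arbitrary (Fin d)))
        _ = _ := by
            refine Finset.sum_congr rfl fun i _ => ?_
            rw [h0 i]
    · -- J = {j}
      rw [Finset.card_eq_one] at h
      obtain ⟨j, rfl⟩ := h
      have hcomp : deltaDiff f {j} 0 x 0
          = f (Function.update 0 j (x j)) - f 0 := by
        rw [show ({j} : Finset (Fin d)) = insert j ∅ from rfl,
          dd_rec' f (Finset.notMem_empty j), dd_empty]
        have h1 : Function.update (0 : Fin d → ℝ≥0) j ((0 : Fin d → ℝ≥0) j) = 0 :=
          Function.update_eq_self j _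
        rw [h1]
      rw [hcomp]
      have hsum : ∑ K ∈ ({j} : Finset (Fin d)).powerset, ∑ i : Fin d,
          |f (fun l => if l ∈ K then x i else 0)|
          = (∑ i : Fin d, |f (fun l => if l ∈ (∅ : Finset (Fin d)) then x i else 0)|)
            + ∑ i : Fin d, |f (fun l => if l ∈ ({j} : Finset (Fin d)) then x i else 0)| := by
        rw [show ({j} : Finset (Fin d)) = insert j ∅ from rfl,
          Finset.sum_powerset_insert (Finset.notMem_empty j), Finset.powerset_empty,
          Finset.sum_singleton, Finset.sum_singleton]
      rw [hsum]
      have e1 : ∀ i : Fin d, (fun l => if l ∈ (∅ : Finset (Fin d)) then x i else 0)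
          = (0 : Fin d → ℝ≥0) := by intro i; funext l; simp
      have e2 : (fun l => if l ∈ ({j} : Finset (Fin d)) then x j else 0)
          = Function.update (0 : Fin d → ℝ≥0) j (x j) := by
        funext l
        rcases eq_or_ne l j with rfl | hlj
        · simp
        · simp [Finset.mem_singleton, hlj, Function.update_of_ne hlj]
      have b1 : |f 0| ≤ ∑ i : Fin d, |f (fun l => if l ∈ (∅ : Finset (Fin d)) then x i else 0)| := by
        have := Finset.single_le_sum
          (f := fun i : Fin d => |f (fun l => if l ∈ (∅ : Finset (Fin d)) then x i else 0)|)
          (fun i _ => abs_nonneg _) (Finset.mem_univ (Classical.arbitrary (Fin d)))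
        simpa only [e1] using this
      have b2 : |f (Function.update 0 j (x j))| ≤ ∑ i : Fin d,
          |f (fun l => if l ∈ ({j} : Finset (Fin d)) then x i else 0)| := by
        have := Finset.single_le_sum
          (f := fun i : Fin d => |f (fun l => if l ∈ ({j} : Finset (Fin d)) then x i else 0)|)
          (fun i _ => abs_nonneg _) (Finset.mem_univ j)
        simpa only [e2] using this
      calc |f (Function.update 0 j (x j)) - f 0|
          ≤ |f (Function.update 0 j (x j))| + |f 0| := abs_sub _ _
        _ ≤ _ := by linarith

lemma pointwise_bound [Nonempty (Fin d)]
    (hσ1 : ∀ J : Finset (Fin d), σ J = 1 ∨ σ J = -1)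
    (hσ3 : ∀ (J : Finset (Fin d)) (a b x : Fin d → ℝ≥0), 2 ≤ J.card →
      (∀ i ∈ J, a i < b i) → 0 ≤ σ J * deltaDiff f J a b x)
    (x : Fin d → ℝ≥0) :
    |f x| ≤ (2 ^ d : ℝ) * ∑ K ∈ (Finset.univ : Finset (Fin d)).powerset, ∑ i : Fin d,
      |f (fun l => if l ∈ K then x i else 0)| := by
  classical
  have hm := dd_mobius f 0 x
  calc |f x| = |∑ J ∈ (Finset.univ : Finset (Fin d)).powerset, deltaDiff f J 0 x 0| := by
        rw [← hm]
    _ ≤ ∑ J ∈ (Finset.univ : Finset (Fin d)).powerset, |deltaDiff f J 0 x 0| :=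
        Finset.abs_sum_le_sum_abs _ _
    _ ≤ ∑ J ∈ (Finset.univ : Finset (Fin d)).powerset, ∑ K ∈ J.powerset, ∑ i : Fin d,
          |f (fun l => if l ∈ K then x i else 0)| :=
        Finset.sum_le_sum fun J _ => T_bound f σ hσ1 hσ3 J x
    _ ≤ ∑ J ∈ (Finset.univ : Finset (Fin d)).powerset,
          ∑ K ∈ (Finset.univ : Finset (Fin d)).powerset, ∑ i : Fin d,
          |f (fun l => if l ∈ K then x i else 0)| := by
        refine Finset.sum_le_sum fun J hJ => ?_
        refine Finset.sum_le_sum_of_subset_of_nonneg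
          (Finset.powerset_mono.2 (Finset.subset_univ J)) fun K _ _ => ?_
        exact Finset.sum_nonneg fun i _ => abs_nonneg _
    _ = _ := by
        rw [Finset.sum_const, Finset.card_powerset, Finset.card_univ, Fintype.card_fin,
          nsmul_eq_mul]
        push_cast
        ring

end Bound

section Cont

variable (f : (Fin d → ℝ≥0) → ℝ) (σ : Finset (Fin d) → ℝ)

lemma margin_rightCont
    (hrc : ∀ (x : Fin d → ℝ≥0) (i : Fin d),
      ContinuousWithinAt (fun t => f (Function.update x i t)) (Set.Ici (x i)) (x i))
    (hσ1 : ∀ J : Finset (Fin d), σ J = 1 ∨ σ J = -1)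
    (hσ2 : ∀ J : Finset (Fin d), J.card = 2 → σ J = 1)
    (hσ3 : ∀ (J : Finset (Fin d)) (a b x : Fin d → ℝ≥0), 2 ≤ J.card →
      (∀ i ∈ J, a i < b i) → 0 ≤ σ J * deltaDiff f J a b x)
    (K : Finset (Fin d)) (t : ℝ≥0) :
    ContinuousWithinAt (fun s => f (fun l => if l ∈ K then s else 0)) (Set.Ici t) t := by
  classical
  set low : Fin d → ℝ≥0 := fun l => if l ∈ K then t else 0 with hlow
  set high : Fin d → ℝ≥0 := fun _ => t + 1 with hhigh
  set L : Fin d → ℝ≥0 → ℝ :=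
    fun j s => f (Function.update low j s) - f (Function.update low j t) with hL
  set U : Fin d → ℝ≥0 → ℝ :=
    fun j s => f (Function.update high j s) - f (Function.update high j t) with hU
  have key : ∀ S : Finset (Fin d), S ⊆ K → ∀ s : ℝ≥0, t ≤ s → s ≤ t + 1 →
      (∑ j ∈ S, L j s) ≤ f (fun l => if l ∈ S then s else if l ∈ K then t else 0) - f low
        ∧ f (fun l => if l ∈ S then s else if l ∈ K then t else 0) - f low
          ≤ ∑ j ∈ S, U j s := by
    intro S
    induction S using Finset.induction_on with
    | empty =>
      intro _ s hts hs1
      have h0 : (fun l => if l ∈ (∅ : Finset (Fin d)) then s else if l ∈ K then t else 0)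
          = low := by funext l; simp [hlow]
      rw [h0]
      simp
    | @insert j S hjS ih =>
      intro hsub s hts hs1
      have hjK : j ∈ K := hsub (Finset.mem_insert_self j S)
      have hS : S ⊆ K := fun i hi => hsub (Finset.mem_insert_of_mem hi)
      set base : Fin d → ℝ≥0 := fun l => if l ∈ S then s else if l ∈ K then t else 0 with hbase
      have hstep : (fun l => if l ∈ insert j S then s else if l ∈ K then t else 0)
          = Function.update base j s := by
        funext l
        rcases eq_or_ne l j with rfl | hlj
        · simp [hbase]
        · simp [Function.update_of_ne hlj, Finset.mem_insert, hlj, hbase]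
      have hbasej : base j = t := by simp [hbase, hjS, hjK]
      have hbt : Function.update base j t = base := by
        rw [← hbasej]; exact Function.update_eq_self j base
      have hlow_le : ∀ l, low l ≤ base l := by
        intro l
        by_cases hlS : l ∈ S
        · simp [hlow, hbase, hlS, hS hlS]; exact hts
        · by_cases hlK : l ∈ K <;> simp [hlow, hbase, hlS, hlK]
      have hle_high : ∀ l, base l ≤ high l := by
        intro l
        by_cases hlS : l ∈ S
        · simpa [hbase, hlS, hhigh] using hs1
        · by_cases hlK : l ∈ K <;> simp [hbase, hlS, hlK, hhigh]
      have h1 : L j s ≤ f (Function.update base j s) - f (Function.update base j t) :=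
        single_diff_mono f σ hσ1 hσ2 hσ3 hts hlow_le
      have h2 : f (Function.update base j s) - f (Function.update base j t) ≤ U j s :=
        single_diff_mono f σ hσ1 hσ2 hσ3 hts hle_high
      obtain ⟨ih1, ih2⟩ := ih hS s hts hs1
      rw [hstep, Finset.sum_insert hjS, Finset.sum_insert hjS]
      rw [hbt] at h1 h2
      constructor <;> linarith
  have hLlim : ∀ j ∈ K, Filter.Tendsto (L j) (nhdsWithin t (Set.Ici t)) (nhds 0) := by
    intro j _
    have h := hrc (Function.update low j t) j
    rw [Function.update_self] at h
    have heq : (fun u => f (Function.update (Function.update low j t) j u))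
        = fun u => f (Function.update low j u) := by
      funext u; rw [Function.update_idem]
    rw [heq] at h
    have h2 := h.tendsto.sub_const (f (Function.update low j t))
    simpa [hL] using h2
  have hUlim : ∀ j ∈ K, Filter.Tendsto (U j) (nhdsWithin t (Set.Ici t)) (nhds 0) := by
    intro j _
    have h := hrc (Function.update high j t) j
    rw [Function.update_self] at h
    have heq : (fun u => f (Function.update (Function.update high j t) j u))
        = fun u => f (Function.update high j u) := by
      funext u; rw [Function.update_idem]
    rw [heq] at h
    have h2 := h.tendsto.sub_const (f (Function.update high j t))
    simpa [hU] using h2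
  have hsumL : Filter.Tendsto (fun s => f low + ∑ j ∈ K, L j s)
      (nhdsWithin t (Set.Ici t)) (nhds (f low)) := by
    have := Filter.Tendsto.const_add (f low) ((tendsto_finset_sum K hLlim))
    simpa using this
  have hsumU : Filter.Tendsto (fun s => f low + ∑ j ∈ K, U j s)
      (nhdsWithin t (Set.Ici t)) (nhds (f low)) := by
    have := Filter.Tendsto.const_add (f low) ((tendsto_finset_sum K hUlim))
    simpa using this
  have hmixK : ∀ s : ℝ≥0, (fun l => if l ∈ K then s else if l ∈ K then t else 0)
      = (fun l => if l ∈ K then s else 0) := by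
    intro s; funext l; by_cases h : l ∈ K <;> simp [h]
  have hev : ∀ᶠ s in nhdsWithin t (Set.Ici t), t ≤ s ∧ s ≤ t + 1 := by
    have h1 : ∀ᶠ s in nhdsWithin t (Set.Ici t), t ≤ s :=
      eventually_mem_nhdsWithin.mono fun s hs => hs
    have h2 : ∀ᶠ s in nhdsWithin t (Set.Ici t), s ≤ t + 1 :=
      Filter.eventually_iff_exists_mem.2 ⟨Set.Iic (t + 1) ∩ Set.Ici t,
        Filter.inter_mem (mem_nhdsWithin_of_mem_nhds (Iic_mem_nhds (lt_add_one t)))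
          self_mem_nhdsWithin, fun s hs => hs.1⟩
    exact h1.and h2
  have hglow : f (fun l => if l ∈ K then t else 0) = f low := by rw [hlow]
  show Filter.Tendsto (fun s => f (fun l => if l ∈ K then s else 0))
      (nhdsWithin t (Set.Ici t)) (nhds (f (fun l => if l ∈ K then t else 0)))
  rw [hglow]
  refine tendsto_of_tendsto_of_tendsto_of_le_of_le' hsumL hsumU ?_ ?_
  · refine hev.mono fun s hs => ?_
    have := (key K (Finset.Subset.refl K) s hs.1 hs.2).1
    rw [hmixK s] at this
    linarith
  · refine hev.mono fun s hs => ?_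
    have := (key K (Finset.Subset.refl K) s hs.1 hs.2).2
    rw [hmixK s] at this
    linarith

lemma measurable_of_rightCont (g : ℝ≥0 → ℝ)
    (hg : ∀ t : ℝ≥0, ContinuousWithinAt g (Set.Ici t) t) : Measurable g := by
  have hceil : ∀ n : ℕ, Measurable (fun t : ℝ≥0 => (⌈t * 2 ^ n⌉₊ : ℕ)) := by
    intro n
    refine measurable_to_countable fun y => ?_
    have hmul : Measurable (fun t : ℝ≥0 => t * 2 ^ n) :=
      measurable_id.mul measurable_const
    rcases Nat.eq_zero_or_pos ⌈y * 2 ^ n⌉₊ with h0 | hpos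
    · have : (fun t : ℝ≥0 => (⌈t * 2 ^ n⌉₊ : ℕ)) ⁻¹' {⌈y * 2 ^ n⌉₊}
          = (fun t : ℝ≥0 => t * 2 ^ n) ⁻¹' (Set.Iic 0) := by
        ext u
        simp only [Set.mem_preimage, Set.mem_singleton_iff, Set.mem_Iic, h0,
          Nat.ceil_eq_zero, le_zero_iff]
      rw [this]
      exact hmul measurableSet_Iic
    · have : (fun t : ℝ≥0 => (⌈t * 2 ^ n⌉₊ : ℕ)) ⁻¹' {⌈y * 2 ^ n⌉₊}
          = (fun t : ℝ≥0 => t * 2 ^ n) ⁻¹'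
            (Set.Ioc ((⌈y * 2 ^ n⌉₊ - 1 : ℕ) : ℝ≥0) ((⌈y * 2 ^ n⌉₊ : ℕ) : ℝ≥0)) := by
        ext u
        simp only [Set.mem_preimage, Set.mem_singleton_iff, Set.mem_Ioc]
        rw [Nat.ceil_eq_iff (by omega)]
      rw [this]
      exact hmul measurableSet_Ioc
  have happrox : ∀ n : ℕ, Measurable (fun t : ℝ≥0 => g ((⌈t * 2 ^ n⌉₊ : ℝ≥0) / 2 ^ n)) :=
    fun n => (measurable_of_countable (fun k : ℕ => g ((k : ℝ≥0) / 2 ^ n))).comp (hceil n)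
  refine measurable_of_tendsto_metrizable happrox (tendsto_pi_nhds.2 fun t => ?_)
  have hseq : Filter.Tendsto (fun n : ℕ => (⌈t * 2 ^ n⌉₊ : ℝ≥0) / 2 ^ n)
      Filter.atTop (nhdsWithin t (Set.Ici t)) := by
    rw [tendsto_nhdsWithin_iff]
    have hge : ∀ n : ℕ, t ≤ (⌈t * 2 ^ n⌉₊ : ℝ≥0) / 2 ^ n := by
      intro n
      have h2n : (0 : ℝ≥0) < 2 ^ n := pow_pos (by norm_num) n
      rw [le_div_iff₀ h2n]
      exact Nat.le_ceil _
    have hle : ∀ n : ℕ, (⌈t * 2 ^ n⌉₊ : ℝ≥0) / 2 ^ n ≤ t + ((2 : ℝ≥0)⁻¹) ^ n := by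
      intro n
      have h2n : (0 : ℝ≥0) < 2 ^ n := pow_pos (by norm_num) n
      rw [div_le_iff₀ h2n]
      calc ((⌈t * 2 ^ n⌉₊ : ℕ) : ℝ≥0) ≤ t * 2 ^ n + 1 := le_of_lt
            (by exact_mod_cast Nat.ceil_lt_add_one (show 0 ≤ t * 2 ^ n from zero_le))
        _ = (t + ((2 : ℝ≥0)⁻¹) ^ n) * 2 ^ n := by
            rw [add_mul, inv_pow]
            congr 1
            rw [inv_mul_cancel₀ h2n.ne']
    constructor
    · have hlim : Filter.Tendsto (fun n : ℕ => t + ((2 : ℝ≥0)⁻¹) ^ n)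
          Filter.atTop (nhds t) := by
        have := Filter.Tendsto.const_add t
          (NNReal.tendsto_pow_atTop_nhds_zero_of_lt_one (r := (2:ℝ≥0)⁻¹)
            (by rw [← NNReal.coe_lt_coe]; norm_num))
        simpa using this
      exact tendsto_of_tendsto_of_tendsto_of_le_of_le tendsto_const_nhds hlim hge hle
    · exact Filter.Eventually.of_forall fun n => hge n
  exact (hg t).tendsto.comp hseq

end Cont

end Stmt19

/-- integrability of a right-continuous Δ-antitonic or Δ-monotonic
function from the integrability of the diagonals of its margins against the
marginal laws. -/
theorem stmt19 (d : ℕ) (hd : 2 ≤ d) (f : (Fin d → ℝ≥0) → ℝ)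
    (hrc : ∀ (x : Fin d → ℝ≥0) (i : Fin d),
      ContinuousWithinAt (fun t => f (Function.update x i t)) (Set.Ici (x i)) (x i))
    (hdelta : DeltaAntitone f ∨ DeltaMonotone f)
    (ν : Measure (Fin d → ℝ≥0)) [IsProbabilityMeasure ν]
    (hint : ∑ J ∈ (Finset.univ : Finset (Fin d)).powerset.erase ∅, ∑ i : Fin d,
      ∫⁻ x, (‖f (fun l => if l ∈ J then x else 0)‖₊ : ℝ≥0∞)
        ∂(ν.map (fun y => y i)) < ⊤) :
    ∫⁻ x, (‖f x‖₊ : ℝ≥0∞) ∂ν < ⊤ := by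
  classical
  have hne : Nonempty (Fin d) := ⟨⟨0, by omega⟩⟩
  obtain ⟨σ, hσ1, hσ2, hσ3⟩ : ∃ σ : Finset (Fin d) → ℝ,
      (∀ J : Finset (Fin d), σ J = 1 ∨ σ J = -1) ∧
      (∀ J : Finset (Fin d), J.card = 2 → σ J = 1) ∧
      (∀ (J : Finset (Fin d)) (a b x : Fin d → ℝ≥0), 2 ≤ J.card →
        (∀ i ∈ J, a i < b i) → 0 ≤ σ J * deltaDiff f J a b x) := by
    rcases hdelta with h | h
    · refine ⟨fun J => (-1 : ℝ) ^ J.card, fun J => ?_, fun J hJ => by simp only []; rw [hJ]; norm_num,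
        fun J a b x h2 hab => h J h2 a b x hab⟩
      rcases Nat.even_or_odd J.card with he | ho
      · exact Or.inl he.neg_one_pow
      · exact Or.inr ho.neg_one_pow
    · exact ⟨fun _ => 1, fun _ => Or.inl rfl, fun _ _ => rfl,
        fun J a b x h2 hab => by rw [one_mul]; exact h J h2 a b x hab⟩
  have hGmeas : ∀ K : Finset (Fin d),
      Measurable (fun t : ℝ≥0 => f (fun l => if l ∈ K then t else 0)) :=
    fun K => Stmt19.measurable_of_rightCont _
      (fun t => Stmt19.margin_rightCont f σ hrc hσ1 hσ2 hσ3 K t)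
  have hmeas1 : ∀ (K : Finset (Fin d)) (i : Fin d),
      Measurable (fun x : Fin d → ℝ≥0 =>
        (‖f (fun l => if l ∈ K then x i else 0)‖₊ : ℝ≥0∞)) :=
    fun K i => ((hGmeas K).comp (measurable_pi_apply i)).nnnorm.coe_nnreal_ennreal
  have hptw : ∀ x : Fin d → ℝ≥0, (‖f x‖₊ : ℝ≥0∞) ≤
      (2 : ℝ≥0∞) ^ d * ∑ K ∈ (Finset.univ : Finset (Fin d)).powerset, ∑ i : Fin d,
        (‖f (fun l => if l ∈ K then x i else 0)‖₊ : ℝ≥0∞) := by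
    intro x
    have hb := Stmt19.pointwise_bound f σ hσ1 hσ3 x
    have h1 := ENNReal.ofReal_le_ofReal hb
    rw [show (‖f x‖₊ : ℝ≥0∞) = ENNReal.ofReal |f x| from Real.enorm_eq_ofReal_abs _]
    refine le_trans h1 (le_of_eq ?_)
    rw [ENNReal.ofReal_mul (by positivity),
      ENNReal.ofReal_sum_of_nonneg (fun K _ => Finset.sum_nonneg fun i _ => abs_nonneg _)]
    congr 1
    · rw [ENNReal.ofReal_pow (by norm_num : (0:ℝ) ≤ 2), ENNReal.ofReal_ofNat]
    · refine Finset.sum_congr rfl fun K _ => ?_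
      rw [ENNReal.ofReal_sum_of_nonneg (fun i _ => abs_nonneg _)]
      exact Finset.sum_congr rfl fun i _ => (Real.enorm_eq_ofReal_abs _).symm
  have hmeassum : Measurable (fun x : Fin d → ℝ≥0 =>
      ∑ K ∈ (Finset.univ : Finset (Fin d)).powerset, ∑ i : Fin d,
        (‖f (fun l => if l ∈ K then x i else 0)‖₊ : ℝ≥0∞)) :=
    Finset.measurable_sum _ fun K _ => Finset.measurable_sum _ fun i _ => hmeas1 K i
  have hstep1 : ∫⁻ x, (‖f x‖₊ : ℝ≥0∞) ∂ν ≤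
      (2 : ℝ≥0∞) ^ d * ∑ K ∈ (Finset.univ : Finset (Fin d)).powerset, ∑ i : Fin d,
        ∫⁻ t, (‖f (fun l => if l ∈ K then t else 0)‖₊ : ℝ≥0∞)
          ∂(ν.map (fun y => y i)) := by
    calc ∫⁻ x, (‖f x‖₊ : ℝ≥0∞) ∂ν
        ≤ ∫⁻ x, (2 : ℝ≥0∞) ^ d * ∑ K ∈ (Finset.univ : Finset (Fin d)).powerset,
            ∑ i : Fin d, (‖f (fun l => if l ∈ K then x i else 0)‖₊ : ℝ≥0∞) ∂ν :=
          lintegral_mono hptw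
      _ = (2 : ℝ≥0∞) ^ d * ∫⁻ x, ∑ K ∈ (Finset.univ : Finset (Fin d)).powerset,
            ∑ i : Fin d, (‖f (fun l => if l ∈ K then x i else 0)‖₊ : ℝ≥0∞) ∂ν :=
          lintegral_const_mul _ hmeassum
      _ = (2 : ℝ≥0∞) ^ d * ∑ K ∈ (Finset.univ : Finset (Fin d)).powerset,
            ∫⁻ x, ∑ i : Fin d, (‖f (fun l => if l ∈ K then x i else 0)‖₊ : ℝ≥0∞) ∂ν := by
          rw [lintegral_finset_sum _
            (fun K _ => Finset.measurable_sum _ fun i _ => hmeas1 K i)]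
      _ = (2 : ℝ≥0∞) ^ d * ∑ K ∈ (Finset.univ : Finset (Fin d)).powerset, ∑ i : Fin d,
            ∫⁻ x, (‖f (fun l => if l ∈ K then x i else 0)‖₊ : ℝ≥0∞) ∂ν := by
          congr 1
          refine Finset.sum_congr rfl fun K _ => ?_
          rw [lintegral_finset_sum _ (fun i _ => hmeas1 K i)]
      _ = (2 : ℝ≥0∞) ^ d * ∑ K ∈ (Finset.univ : Finset (Fin d)).powerset, ∑ i : Fin d,
            ∫⁻ t, (‖f (fun l => if l ∈ K then t else 0)‖₊ : ℝ≥0∞)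
              ∂(ν.map (fun y => y i)) := by
          congr 1
          refine Finset.sum_congr rfl fun K _ => ?_
          refine Finset.sum_congr rfl fun i _ => ?_
          exact (lintegral_map ((hGmeas K).nnnorm.coe_nnreal_ennreal)
            (measurable_pi_apply i)).symm
  refine lt_of_le_of_lt hstep1 (ENNReal.mul_lt_top (ENNReal.pow_lt_top (show (2 : ℝ≥0∞) < ⊤ by norm_num)) ?_)
  rw [← Finset.sum_erase_add _ _
    (Finset.mem_powerset.2 (Finset.empty_subset (Finset.univ : Finset (Fin d))))]
  refine ENNReal.add_lt_top.2 ⟨hint, ?_⟩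
  have hempty : ∑ i : Fin d, ∫⁻ t, (‖f (fun l => if l ∈ (∅ : Finset (Fin d)) then t else 0)‖₊ :
      ℝ≥0∞) ∂(ν.map (fun y => y i)) = ∑ i : Fin d, (‖f (fun _ => 0)‖₊ : ℝ≥0∞) := by
    refine Finset.sum_congr rfl fun i _ => ?_
    haveI : IsProbabilityMeasure (ν.map (fun y : Fin d → ℝ≥0 => y i)) :=
      Measure.isProbabilityMeasure_map (measurable_pi_apply i).aemeasurable
    simp only [Finset.notMem_empty, if_false]
    rw [lintegral_const, measure_univ, mul_one]
  rw [hempty]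
  exact ENNReal.sum_lt_top.2 fun i _ => ENNReal.coe_lt_top
end
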